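/- For every h = (h_0, …, h_ν) ∈ ℂ^{ν+1} whose autocorrelations c_k = Σ_{m=0}^{ν−k} h_m · conj(h_{m+k}), k = 1, …, ν, are not all zero, the Lebesgue measure of D(h) = { u ∈ [−π, π] : |H(e^{−ju})|² > ‖h‖² } satisfies |D(h)| ≥ (1/2) · ( 2(2ν+1) Σ_{k=1}^{ν} |c_k|² )^{−1/2} · ∫_{−π}^{π} | |H(e^{−ju})|² − ‖h‖² | du. -/

import Mathlib

open MeasureTheory Finset

noncomputable def Hf (ν : ℕ) (h : ℕ → ℂ) (u : ℝ) : ℂ :=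
  ∑ m ∈ Finset.range (ν + 1), h m * Complex.exp (-(Complex.I * m * u))

noncomputable def norm2 (ν : ℕ) (h : ℕ → ℂ) : ℝ :=
  ∑ m ∈ Finset.range (ν + 1), ‖h m‖ ^ 2

noncomputable def ac (ν : ℕ) (h : ℕ → ℂ) (k : ℕ) : ℂ :=
  ∑ m ∈ Finset.range (ν + 1 - k), h m * (starRingEnd ℂ) (h (m + k))

noncomputable def fH (ν : ℕ) (h : ℕ → ℂ) (u : ℝ) : ℝ :=
  ‖Hf ν h u‖ ^ 2 - norm2 ν h

def Dset (ν : ℕ) (h : ℕ → ℂ) : Set ℝ :=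
  {u | u ∈ Set.Icc (-Real.pi) Real.pi ∧ 0 < fH ν h u}

open scoped ComplexConjugate

/-! Expanding `|H|²` by lags gives `f(h, u) = 2 Re Σ_{k=1}^ν c_k e^{jku}`. So `f` has mean zero
over a period, whence `∫ |f| = 2 ∫ max f 0`; and by Cauchy–Schwarz
`|f| ≤ 2 Σ |c_k| ≤ √(4ν Σ |c_k|²) ≤ M := √(2(2ν+1) Σ |c_k|²)`, so `max f 0 ≤ M · 1_{D(h)}`. -/

section Lags

variable {M : Type*} [AddCommMonoid M] (N : ℕ) (F : ℕ → ℕ → M)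

theorem sum_range_sum_Ico_succ_eq_sum_lags :
    ∑ m ∈ range N, ∑ n ∈ Ico (m + 1) N, F m n =
      ∑ k ∈ Icc 1 (N - 1), ∑ m ∈ range (N - k), F m (m + k) := by
  rw [sum_sigma', sum_sigma']
  refine sum_nbij' (fun p ↦ ⟨p.2 - p.1, p.1⟩) (fun q ↦ ⟨q.2, q.2 + q.1⟩) ?_ ?_ ?_ ?_ ?_ <;>
    rintro ⟨a, b⟩ hab <;> simp only [mem_sigma, mem_range, mem_Ico, mem_Icc] at hab ⊢
  all_goals first | omega | (congr 1; omega)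

theorem sum_range_sum_range_eq_diag_add_lags :
    ∑ m ∈ range N, ∑ n ∈ range N, F m n =
      ∑ m ∈ range N, F m m +
        ∑ k ∈ Icc 1 (N - 1), ∑ m ∈ range (N - k), (F m (m + k) + F (m + k) m) := by
  have split : ∀ m ∈ range N, ∑ n ∈ range N, F m n =
      F m m + ∑ n ∈ Ico (m + 1) N, F m n + ∑ n ∈ range m, F m n := by
    intro m hm
    rw [mem_range] at hm
    rw [range_eq_Ico, range_eq_Ico, ← sum_Ico_consecutive _ (Nat.zero_le m) hm.le,
      sum_eq_sum_Ico_succ_bot hm]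
    abel
  have lower : ∑ m ∈ range N, ∑ n ∈ range m, F m n =
      ∑ n ∈ range N, ∑ m ∈ Ico (n + 1) N, F m n :=
    sum_comm' fun m n ↦ by simp only [mem_range, mem_Ico]; omega
  rw [sum_congr rfl split, sum_add_distrib, sum_add_distrib, lower,
    sum_range_sum_Ico_succ_eq_sum_lags, sum_range_sum_Ico_succ_eq_sum_lags N (fun m n ↦ F n m),
    add_assoc]
  simp only [sum_add_distrib]

end Lags

theorem Complex.re_mul_conj_add_re_mul_conj (a b : ℂ) :
    (a * conj b).re + (b * conj a).re = 2 * (a * conj b).re := by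
  simp only [mul_re, conj_re, conj_im]; ring

theorem norm_sum_range_sq_eq_add_lags (N : ℕ) (z : ℕ → ℂ) :
    ‖∑ m ∈ range N, z m‖ ^ 2 = ∑ m ∈ range N, ‖z m‖ ^ 2 +
      ∑ k ∈ Icc 1 (N - 1), 2 * (∑ m ∈ range (N - k), z m * conj (z (m + k))).re := by
  have expand : ‖∑ m ∈ range N, z m‖ ^ 2 =
      ∑ m ∈ range N, ∑ n ∈ range N, (z m * conj (z n)).re := by
    rw [← Complex.ofReal_re (_ ^ 2), Complex.ofReal_pow, ← Complex.mul_conj', map_sum,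
      sum_mul_sum]
    simp only [Complex.re_sum]
  simp only [expand, sum_range_sum_range_eq_diag_add_lags, Complex.re_mul_conj_add_re_mul_conj,
    Complex.mul_conj', ← Complex.ofReal_pow, Complex.ofReal_re, Complex.re_sum, mul_sum]

open Complex in
theorem fH_eq_sum_re (ν : ℕ) (h : ℕ → ℂ) (u : ℝ) :
    fH ν h u = ∑ k ∈ Icc 1 ν, 2 * (ac ν h k * exp (I * k * u)).re := by
  have norm_term : ∀ m : ℕ, ‖h m * exp (-(I * m * u))‖ = ‖h m‖ := fun m ↦ by
    rw [norm_mul, norm_exp]; simp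
  have lag_term : ∀ m k : ℕ,
      h m * exp (-(I * m * u)) * conj (h (m + k) * exp (-(I * ↑(m + k) * u)))
        = h m * conj (h (m + k)) * exp (I * k * u) := fun m k ↦ by
    rw [map_mul, ← exp_conj, mul_mul_mul_comm, ← exp_add]
    simp only [map_neg, map_mul, conj_I, conj_ofReal, map_natCast]
    push_cast
    ring_nf
  rw [fH, Hf, norm_sum_range_sq_eq_add_lags, norm2, Nat.add_sub_cancel]
  simp only [norm_term, lag_term, ← sum_mul, add_sub_cancel_left]
  rfl

theorem continuous_fH (ν : ℕ) (h : ℕ → ℂ) : Continuous (fH ν h) := by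
  unfold fH Hf
  fun_prop

open Complex Real in
theorem integral_exp_I_int_mul_eq_zero (a : ℝ) {k : ℤ} (hk : k ≠ 0) :
    ∫ u in a..a + 2 * π, exp (I * k * u) = 0 := by
  have hc : I * k ≠ 0 := mul_ne_zero I_ne_zero (Int.cast_ne_zero.mpr hk)
  have periodic : exp (I * k * ↑(a + 2 * π)) = exp (I * k * a) := by
    rw [← mul_one (exp (I * k * a)), ← exp_int_mul_two_pi_mul_I k, ← Complex.exp_add]
    push_cast
    ring_nf
  rw [integral_exp_mul_complex hc, periodic, sub_self, zero_div]

open Complex Real in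
theorem integral_fH_eq_zero (ν : ℕ) (h : ℕ → ℂ) : ∫ u in -π..π, fH ν h u = 0 := by
  simp_rw [fH_eq_sum_re]
  rw [intervalIntegral.integral_finsetSum fun k _ ↦ by
    apply Continuous.intervalIntegrable; fun_prop]
  refine sum_eq_zero fun k hk ↦ ?_
  have hk0 : (k : ℤ) ≠ 0 := by rw [mem_Icc] at hk; omega
  have h_exp := integral_exp_I_int_mul_eq_zero (-π) hk0
  rw [show -π + 2 * π = π by ring, Int.cast_natCast] at h_exp
  have h_re := intervalIntegral.intervalIntegral_re (𝕜 := ℂ) (μ := volume) (a := -π) (b := π)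
    (f := fun u : ℝ ↦ ac ν h k * exp (I * k * u))
    (by apply Continuous.intervalIntegrable; fun_prop)
  simp only [RCLike.re_to_complex] at h_re
  rw [intervalIntegral.integral_const_mul, h_re, intervalIntegral.integral_const_mul, h_exp]
  simp

theorem abs_fH_le_two_mul_sum_norm_ac (ν : ℕ) (h : ℕ → ℂ) (u : ℝ) :
    |fH ν h u| ≤ 2 * ∑ k ∈ Icc 1 ν, ‖ac ν h k‖ := by
  rw [fH_eq_sum_re, mul_sum]
  refine (abs_sum_le_sum_abs _ _).trans (sum_le_sum fun k _ ↦ ?_)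
  rw [abs_mul, abs_two]
  gcongr
  refine (Complex.abs_re_le_norm _).trans ?_
  rw [norm_mul, Complex.norm_exp]
  simp

theorem abs_fH_le_sqrt (ν : ℕ) (h : ℕ → ℂ) (u : ℝ) :
    |fH ν h u| ≤ Real.sqrt (2 * (2 * ν + 1) * ∑ k ∈ Icc 1 ν, ‖ac ν h k‖ ^ 2) := by
  have cauchy_schwarz := sq_sum_le_card_mul_sum_sq (s := Icc 1 ν) (f := fun k ↦ ‖ac ν h k‖)
  rw [Nat.card_Icc, Nat.add_sub_cancel] at cauchy_schwarz
  calc |fH ν h u| ≤ 2 * ∑ k ∈ Icc 1 ν, ‖ac ν h k‖ := abs_fH_le_two_mul_sum_norm_ac ν h u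
    _ = Real.sqrt ((2 * ∑ k ∈ Icc 1 ν, ‖ac ν h k‖) ^ 2) := (Real.sqrt_sq (by positivity)).symm
    _ ≤ Real.sqrt (2 * (2 * ν + 1) * ∑ k ∈ Icc 1 ν, ‖ac ν h k‖ ^ 2) := by
      gcongr
      nlinarith [sum_nonneg fun k (_ : k ∈ Icc 1 ν) ↦ sq_nonneg ‖ac ν h k‖]

theorem integral_abs_le_two_mul_measureReal_pos {α : Type*} [MeasurableSpace α]
    {μ : Measure α} [IsFiniteMeasure μ] {f : α → ℝ} {M : ℝ} (hf : Integrable f μ)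
    (hf_meas : Measurable f) (hf_zero : ∫ x, f x ∂μ = 0) (hM : ∀ x, f x ≤ M) :
    ∫ x, |f x| ∂μ ≤ 2 * M * μ.real {x | 0 < f x} := by
  have abs_eq : ∀ x, |f x| = 2 * max (f x) 0 - f x := fun x ↦ by
    rcases le_total 0 (f x) with hx | hx
    · rw [abs_of_nonneg hx, max_eq_left hx]; ring
    · rw [abs_of_nonpos hx, max_eq_right hx]; ring
  have pos_le : ∀ x, max (f x) 0 ≤ {x | 0 < f x}.indicator (fun _ ↦ M) x := fun x ↦ by
    by_cases hx : 0 < f x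
    · simpa [hx] using ⟨hM x, hx.le.trans (hM x)⟩
    · simp [hx, not_lt.mp hx]
  calc ∫ x, |f x| ∂μ = 2 * ∫ x, max (f x) 0 ∂μ - ∫ x, f x ∂μ := by
        simp_rw [abs_eq]
        rw [integral_sub (hf.pos_part.const_mul 2) hf, integral_const_mul]
    _ ≤ 2 * ∫ x, {x | 0 < f x}.indicator (fun _ ↦ M) x ∂μ := by
      rw [hf_zero, sub_zero]
      refine mul_le_mul_of_nonneg_left ?_ zero_le_two
      exact integral_mono_of_nonneg (.of_forall fun x ↦ le_max_right _ _)
        ((integrable_const M).indicator (measurableSet_lt measurable_const hf_meas))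
        (.of_forall pos_le)
    _ = 2 * M * μ.real {x | 0 < f x} := by
      rw [integral_indicator_const _ (measurableSet_lt measurable_const hf_meas), smul_eq_mul]
      ring

theorem measure_Dset_ge_integral_bound_general (ν : ℕ) (h : ℕ → ℂ) :
    (1 / 2) * (Real.sqrt (2 * (2 * ν + 1) *
        ∑ k ∈ Finset.Icc 1 ν, ‖ac ν h k‖ ^ 2))⁻¹ *
      (∫ u in (-Real.pi)..Real.pi, |fH ν h u|) ≤
    (volume (Dset ν h)).toReal := by
  set M := Real.sqrt (2 * (2 * ν + 1) * ∑ k ∈ Icc 1 ν, ‖ac ν h k‖ ^ 2)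
  have hπ : -Real.pi ≤ Real.pi := by linarith [Real.pi_pos]
  have hD : {u | 0 < fH ν h u} ∩ Set.Icc (-Real.pi) Real.pi = Dset ν h := Set.inter_comm _ _
  have h_int : ∫ u in -Real.pi..Real.pi, |fH ν h u| ≤ 2 * M * (volume (Dset ν h)).toReal := by
    have hfH := continuous_fH ν h
    have h_zero : ∫ u in Set.Icc (-Real.pi) Real.pi, fH ν h u = 0 := by
      rw [integral_Icc_eq_integral_Ioc, ← intervalIntegral.integral_of_le hπ, integral_fH_eq_zero]
    have := integral_abs_le_two_mul_measureReal_pos hfH.integrableOn_Icc hfH.measurable h_zero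
      fun u ↦ (le_abs_self _).trans (abs_fH_le_sqrt ν h u)
    rwa [measureReal_restrict_apply (measurableSet_lt measurable_const hfH.measurable), hD,
      integral_Icc_eq_integral_Ioc, ← intervalIntegral.integral_of_le hπ, measureReal_def] at this
  calc 1 / 2 * M⁻¹ * ∫ u in -Real.pi..Real.pi, |fH ν h u|
      ≤ 1 / 2 * M⁻¹ * (2 * M * (volume (Dset ν h)).toReal) := by gcongr
    _ = M⁻¹ * M * (volume (Dset ν h)).toReal := by ring
    _ ≤ (volume (Dset ν h)).toReal :=
      mul_le_of_le_one_left ENNReal.toReal_nonneg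
        (inv_mul_le_one_of_le₀ le_rfl (Real.sqrt_nonneg _))

/-- Equation (14): for every `h` whose autocorrelations are not all zero,
`|D(h)| ≥ (1/2) (2(2ν+1) Σ_{k=1}^{ν} |c_k|²)^{-1/2} ∫_{-π}^{π} |f(h, u)| du`. -/
theorem measure_Dset_ge_integral_bound (ν : ℕ) (h : ℕ → ℂ)
    (hc : ∃ k ∈ Finset.Icc 1 ν, ac ν h k ≠ 0) :
    (1 / 2) * (Real.sqrt (2 * (2 * ν + 1) *
        ∑ k ∈ Finset.Icc 1 ν, ‖ac ν h k‖ ^ 2))⁻¹ *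
      (∫ u in (-Real.pi)..Real.pi, |fH ν h u|) ≤
    (volume (Dset ν h)).toReal :=
  measure_Dset_ge_integral_bound_general ν h
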